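/- Let P_1 and P_2 be two paths in the integer grid, each with at most k bends. Then P_1 and P_2 share a grid edge if and only if they share a grid edge that is a relevant edge (an extremity edge or bend edge) of P_1 or of P_2. -/
import Mathlib


/-- A grid edge: a lattice point together with a direction; `true` means the
horizontal edge from `pt` to `pt + (1,0)`, `false` the vertical edge from `pt`
to `pt + (0,1)`. -/
structure GridEdge where
  pt : ℤ × ℤ
  horiz : Bool
deriving DecidableEq

/-- The two endpoints of a grid edge. -/
def GridEdge.endpoints (e : GridEdge) : Finset (ℤ × ℤ) :=
  {e.pt, if e.horiz then (e.pt.1 + 1, e.pt.2) else (e.pt.1, e.pt.2 + 1)}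

/-- Two distinct grid edges are adjacent when they share an endpoint. -/
def GridEdge.adj (e f : GridEdge) : Prop :=
  e ≠ f ∧ (e.endpoints ∩ f.endpoints).Nonempty

/-- A simple path in the integer grid, given by its sequence of edges:
consecutive edges are adjacent, all edges are distinct, and
non-consecutive edges are non-adjacent. -/
structure GridPath where
  edges : List GridEdge
  nonempty : edges ≠ []
  nodup : edges.Nodup
  chain : edges.Chain' GridEdge.adj
  simple : ∀ i j : ℕ, i + 1 < j → ∀ (hi : i < edges.length) (hj : j < edges.length),
    ¬ GridEdge.adj (edges.get ⟨i, hi⟩) (edges.get ⟨j, hj⟩)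

/-- The number of bends of a grid path: consecutive pairs of edges with
different directions. -/
def GridPath.bends (P : GridPath) : ℕ :=
  ((P.edges.zip P.edges.tail).filter fun q => q.1.horiz != q.2.horiz).length

/-- Two paths (edge-)intersect when they share a grid edge. -/
def GridPath.Inter (P Q : GridPath) : Prop :=
  ∃ e : GridEdge, e ∈ P.edges ∧ e ∈ Q.edges

/-- A relevant edge of a path: an extremity (first or last) edge or a bend edge. -/
def GridPath.IsRelevant (P : GridPath) (e : GridEdge) : Prop :=
  P.edges.head? = some e ∨ P.edges.getLast? = some e ∨
    ∃ q ∈ P.edges.zip P.edges.tail, q.1.horiz ≠ q.2.horiz ∧ (e = q.1 ∨ e = q.2)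

/-- An EPG representation of a graph: vertices are assigned grid paths, and two
distinct vertices are adjacent iff their paths share a grid edge. -/
def IsEPGRep {V : Type*} (G : SimpleGraph V) (P : V → GridPath) : Prop :=
  ∀ u v : V, u ≠ v → (G.Adj u v ↔ (P u).Inter (P v))

/-- The Helly property for a family of grid paths: every pairwise
edge-intersecting subfamily has a grid edge common to all its members. -/
def HellyEPG {ι : Type*} (P : ι → GridPath) : Prop :=
  ∀ T : Set ι, (∀ i ∈ T, ∀ j ∈ T, (P i).Inter (P j)) →
    ∃ e : GridEdge, ∀ i ∈ T, e ∈ (P i).edges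

/-- The set of maximal cliques of a graph. -/
def maxCliques {V : Type*} (G : SimpleGraph V) : Set (Set V) :=
  {s | G.IsClique s ∧ ∀ t : Set V, G.IsClique t → s ⊆ t → s = t}

/-- Shift a grid edge along its own direction. -/
def GridEdge.shift (e : GridEdge) (d : ℤ) : GridEdge :=
  if e.horiz then ⟨(e.pt.1 + d, e.pt.2), true⟩ else ⟨(e.pt.1, e.pt.2 + d), false⟩

lemma GridEdge.adj_symm {e f : GridEdge} (h : e.adj f) : f.adj e := by
  obtain ⟨hne, x, hx⟩ := h
  exact ⟨fun h' => hne h'.symm, ⟨x, by rw [Finset.inter_comm]; exact hx⟩⟩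

lemma GridEdge.adj_same_dir {e f : GridEdge} (hadj : e.adj f) (hdir : e.horiz = f.horiz) :
    f = e.shift 1 ∨ f = e.shift (-1) := by
  obtain ⟨hne, x, hx⟩ := hadj
  obtain ⟨⟨a, b⟩, he⟩ := e
  obtain ⟨⟨c, d⟩, hf⟩ := f
  obtain ⟨x1, x2⟩ := x
  simp only at hdir; subst hdir
  cases he <;>
    simp_all [Finset.mem_inter, GridEdge.endpoints, GridEdge.shift, Prod.ext_iff] <;>
    omega

lemma zip_tail_mem {l : List GridEdge} {j : ℕ} (h : j + 1 < l.length) :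
    (l[j]'(by omega), l[j+1]'h) ∈ l.zip l.tail := by
  have hz : j < (l.zip l.tail).length := by
    simp only [List.length_zip, List.length_tail]; omega
  have := List.getElem_zip (l := l) (l' := l.tail) (i := j) (h := hz)
  rw [List.getElem_tail] at this
  rw [← this]
  exact List.getElem_mem _

lemma consec_adj (P : GridPath) {j : ℕ} (h : j + 1 < P.edges.length) :
    GridEdge.adj (P.edges[j]'(by omega)) (P.edges[j+1]'h) := by
  have := List.isChain_iff_getElem.mp P.chain j (by omega)
  simpa using this

lemma no_bend_dir (P : GridPath) {e : GridEdge} (hr : ¬ P.IsRelevant e)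
    {j : ℕ} (h : j + 1 < P.edges.length)
    (he : e = P.edges[j]'(by omega) ∨ e = P.edges[j+1]'h) :
    (P.edges[j]'(by omega)).horiz = (P.edges[j+1]'h).horiz := by
  have hq : ¬(((P.edges[j]'(by omega)).horiz ≠ (P.edges[j+1]'h).horiz) ∧
      (e = P.edges[j]'(by omega) ∨ e = P.edges[j+1]'h)) :=
    fun hc => hr (Or.inr (Or.inr ⟨_, zip_tail_mem h, hc⟩))
  by_contra hc
  exact hq ⟨hc, he⟩

/-- An interior, non-bend edge of a path has both shifted neighbours on the path. -/
lemma shifts_mem (P : GridPath) {e : GridEdge} (he : e ∈ P.edges) (hr : ¬ P.IsRelevant e) :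
    e.shift 1 ∈ P.edges ∧ e.shift (-1) ∈ P.edges := by
  obtain ⟨j, hj, hje⟩ := List.mem_iff_getElem.mp he
  have hj0 : j ≠ 0 := by
    rintro rfl
    exact hr (Or.inl (by rw [List.head?_eq_getElem?, List.getElem?_eq_getElem hj, hje]))
  obtain ⟨i, rfl⟩ : ∃ i, j = i + 1 := ⟨j - 1, by omega⟩
  have hj2 : i + 1 + 1 < P.edges.length := by
    rcases Nat.lt_or_ge (i + 1 + 1) P.edges.length with h | h
    · exact h
    · exfalso
      have hjl : i + 1 = P.edges.length - 1 := by omega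
      exact hr (Or.inr (Or.inl (by
        rw [List.getLast?_eq_getElem?, ← hjl, List.getElem?_eq_getElem hj, hje])))
  set p := P.edges[i]'(by omega) with hp
  set s := P.edges[i+1+1]'hj2 with hs
  have hdir1 : p.horiz = e.horiz := by
    have := no_bend_dir P hr (j := i) (by omega) (Or.inr hje.symm)
    rw [hje] at this; exact this
  have hdir2 : e.horiz = s.horiz := by
    have := no_bend_dir P hr (j := i+1) hj2 (Or.inl hje.symm)
    rw [hje] at this; exact this
  have hadj1 : e.adj p := by
    have := consec_adj P (j := i) (by omega)
    rw [hje] at this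
    exact GridEdge.adj_symm this
  have hadj2 : e.adj s := by
    have := consec_adj P (j := i+1) hj2
    rw [hje] at this
    exact this
  have hps : p ≠ s := by
    intro hc
    have := (P.nodup.getElem_inj_iff).mp hc
    omega
  have h1 := GridEdge.adj_same_dir hadj1 hdir1.symm
  have h2 := GridEdge.adj_same_dir hadj2 hdir2
  have hpm : p ∈ P.edges := List.getElem_mem _
  have hsm : s ∈ P.edges := List.getElem_mem _
  rcases h1 with h1 | h1 <;> rcases h2 with h2 | h2 <;>
    first
      | (exact absurd (h1.trans h2.symm) hps)
      | (exact ⟨h1 ▸ hpm, h2 ▸ hsm⟩)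
      | (exact ⟨h2 ▸ hsm, h1 ▸ hpm⟩)

/-- Two paths with at most `k` bends share a grid edge iff they share a grid
edge that is relevant for one of them. -/
theorem inter_iff_inter_in_relevant (k : ℕ) (P₁ P₂ : GridPath)
    (h₁ : P₁.bends ≤ k) (h₂ : P₂.bends ≤ k) :
    P₁.Inter P₂ ↔
      ∃ e : GridEdge, e ∈ P₁.edges ∧ e ∈ P₂.edges ∧
        (P₁.IsRelevant e ∨ P₂.IsRelevant e) := by
  constructor
  · rintro ⟨e, he1, he2⟩
    obtain ⟨i, hi, hie⟩ := List.mem_iff_getElem.mp he1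
    -- induction on the distance to the end of P₁
    suffices H : ∀ n i (hi : i < P₁.edges.length), P₁.edges.length - i ≤ n →
        P₁.edges[i] ∈ P₂.edges →
        ∃ e : GridEdge, e ∈ P₁.edges ∧ e ∈ P₂.edges ∧
          (P₁.IsRelevant e ∨ P₂.IsRelevant e) by
      exact H (P₁.edges.length - i) i hi le_rfl (hie ▸ he2)
    intro n
    induction n with
    | zero => intro i hi h; omega
    | succ n ih =>
      intro i hi hle hmem
      set e := P₁.edges[i] with he
      by_cases hrel : P₁.IsRelevant e ∨ P₂.IsRelevant e
      · exact ⟨e, List.getElem_mem _, hmem, hrel⟩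
      push_neg at hrel
      obtain ⟨hr1, hr2⟩ := hrel
      have hi1 : i + 1 < P₁.edges.length := by
        rcases Nat.lt_or_ge (i + 1) P₁.edges.length with h | h
        · exact h
        · exfalso
          have : i = P₁.edges.length - 1 := by omega
          exact hr1 (Or.inr (Or.inl (by
            rw [List.getLast?_eq_getElem?, ← this, List.getElem?_eq_getElem hi])))
      have hadj : e.adj (P₁.edges[i+1]'hi1) := consec_adj P₁ hi1
      have hdir : e.horiz = (P₁.edges[i+1]'hi1).horiz :=
        no_bend_dir P₁ hr1 hi1 (Or.inl rfl)
      have hsuc := GridEdge.adj_same_dir hadj hdir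
      have hshift := shifts_mem P₂ hmem hr2
      have hnext : P₁.edges[i+1]'hi1 ∈ P₂.edges := by
        rcases hsuc with h | h <;> rw [h]
        · exact hshift.1
        · exact hshift.2
      exact ih (i + 1) hi1 (by omega) hnext
  · rintro ⟨e, he1, he2, _⟩
    exact ⟨e, he1, he2⟩
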